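/- Let f : X → X be a continuous map on a compact metric space and U a finite open cover. Then h_L^+(f,U) = limsup_{n→∞} -(1/n) log δ(f^{-n}(U)), where δ denotes the Lebesgue number. -/

import Mathlib

open Set Filter Topology Metric
open scoped ENNReal

/-- `U` is an open cover of `X`: a family of open sets whose union is `X`. -/
def IsOpenCover {X : Type*} [MetricSpace X] (U : Set (Set X)) : Prop :=
  (∀ A ∈ U, IsOpen A) ∧ ⋃₀ U = Set.univ

/-- The Lebesgue number of a cover `U`: the largest `δ` such that every open
ball of radius `δ` is contained in some element of `U`. -/
noncomputable def leb {X : Type*} [MetricSpace X] (U : Set (Set X)) : ℝ≥0∞ :=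
  sSup {δ : ℝ≥0∞ | ∀ x : X, ∃ A ∈ U, EMetric.ball x δ ⊆ A}

/-- The cover `{g⁻¹(A) : A ∈ U}`. -/
def preCov {X : Type*} (g : X → X) (U : Set (Set X)) : Set (Set X) :=
  (fun A => g ⁻¹' A) '' U

/-- The join `U ∨ V = {A ∩ B : A ∈ U, B ∈ V}` of two covers. -/
def covJoin {X : Type*} (U V : Set (Set X)) : Set (Set X) :=
  {S | ∃ A ∈ U, ∃ B ∈ V, S = A ∩ B}

/-- The cover `U_f^n = ⋁_{k=0}^{n-1} f^{-k}(U)`. -/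
def covSeq {X : Type*} (f : X → X) (U : Set (Set X)) (n : ℕ) : Set (Set X) :=
  {S | ∃ g : Fin n → Set X, (∀ k, g k ∈ U) ∧ S = ⋂ k : Fin n, (f^[(k : ℕ)]) ⁻¹' g k}

/-- `δ_n(f,U)`, the Lebesgue number of `U_f^n`. -/
noncomputable def lebN {X : Type*} [MetricSpace X] (f : X → X) (U : Set (Set X)) (n : ℕ) : ℝ≥0∞ :=
  leb (covSeq f U n)

/-- `h_L^+(f,U) = limsup_n -(1/n) log δ_n(f,U)`. -/
noncomputable def hLplus {X : Type*} [MetricSpace X] (f : X → X) (U : Set (Set X)) : EReal :=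
  Filter.limsup (fun n : ℕ => ((-Real.log ((lebN f U n).toReal) / n : ℝ) : EReal)) atTop

/-- `h_L^-(f,U) = liminf_n -(1/n) log δ_n(f,U)`. -/
noncomputable def hLminus {X : Type*} [MetricSpace X] (f : X → X) (U : Set (Set X)) : EReal :=
  Filter.liminf (fun n : ℕ => ((-Real.log ((lebN f U n).toReal) / n : ℝ) : EReal)) atTop

/-- `h_L^+(f)`: supremum over finite open covers. -/
noncomputable def hLplusSup {X : Type*} [MetricSpace X] (f : X → X) : EReal :=
  ⨆ (U : Set (Set X)) (_ : IsOpenCover U ∧ U.Finite), hLplus f U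

/-- `h_L^-(f)`: supremum over finite open covers. -/
noncomputable def hLminusSup {X : Type*} [MetricSpace X] (f : X → X) : EReal :=
  ⨆ (U : Set (Set X)) (_ : IsOpenCover U ∧ U.Finite), hLminus f U

/-- The diameter of a cover: supremum of diameters of its elements. -/
noncomputable def covDiam {X : Type*} [MetricSpace X] (U : Set (Set X)) : ℝ≥0∞ :=
  ⨆ A ∈ U, EMetric.diam A

/-- `U` refines `V`: every element of `U` is contained in some element of `V`. -/
def Refines {X : Type*} (U V : Set (Set X)) : Prop :=
  ∀ A ∈ U, ∃ B ∈ V, A ⊆ B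

/-- `N(γ)`: the minimal number of open `γ`-balls needed to cover `X`. -/
noncomputable def covN (X : Type*) [MetricSpace X] (γ : ℝ≥0∞) : ℕ :=
  sInf {n : ℕ | ∃ s : Finset X, s.card = n ∧ ⋃ x ∈ s, EMetric.ball x γ = Set.univ}

/-- `S(U)`: the smallest cardinality of a subcover of `U`. -/
noncomputable def covS {X : Type*} [MetricSpace X] (U : Set (Set X)) : ℕ :=
  sInf {m : ℕ | ∃ W ⊆ U, ⋃₀ W = Set.univ ∧ W.ncard = m}

/-- `s_n(f,ε)`: maximal cardinality of an `(n,ε)`-separated set. -/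
noncomputable def sep {X : Type*} [MetricSpace X] (f : X → X) (n : ℕ) (ε : ℝ) : ℕ :=
  sSup {m : ℕ | ∃ E : Finset X, E.card = m ∧
    ∀ x ∈ E, ∀ y ∈ E, x ≠ y → ∃ k < n, ε < dist (f^[k] x) (f^[k] y)}

/-- Topological entropy via `(n,ε)`-separated sets. -/
noncomputable def topEnt {X : Type*} [MetricSpace X] (f : X → X) : EReal :=
  ⨆ (ε : ℝ) (_ : 0 < ε),
    Filter.limsup (fun n : ℕ => ((Real.log (sep f n ε) / n : ℝ) : EReal)) atTop

/-- Upper box dimension of `X`. -/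
noncomputable def dimB (X : Type*) [MetricSpace X] : EReal :=
  Filter.limsup
    (fun γ : ℝ => ((Real.log (covN X (ENNReal.ofReal γ)) / -Real.log γ : ℝ) : EReal))
    (nhdsWithin (0:ℝ) (Set.Ioi 0))
/-! `δ_n(f,U)` is the minimum of `δ(f^{-k}U)` over `k < n`, so `-log δ_n` is the running
maximum of `-log δ(f^{-k}U)`, and a running maximum `M` of a sequence `d` has the same growth
rate `limsup M_n / n` as `d`: once `d_k < z k` for `k ≥ K`, `M_n ≤ M_K + z n`. -/

section Lebesgue

variable {X : Type*} [MetricSpace X]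

lemma exists_ball_subset_of_lt_leb {V : Set (Set X)} {δ : ℝ≥0∞} (h : δ < leb V) (x : X) :
    ∃ A ∈ V, eball x δ ⊆ A := by
  obtain ⟨δ', hδ', hlt⟩ := lt_sSup_iff.mp h
  obtain ⟨A, hA, hsub⟩ := hδ' x
  exact ⟨A, hA, (eball_subset_eball hlt.le).trans hsub⟩

lemma leb_pos [CompactSpace X] {V : Set (Set X)} (hV : IsOpenCover V) : 0 < leb V := by
  obtain ⟨δ, hδ, hball⟩ :=
    lebesgue_number_lemma_of_emetric_sUnion isCompact_univ hV.1 hV.2.ge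
  exact hδ.trans_le (le_sSup fun x => hball x (mem_univ x))

lemma leb_le_ediam_univ {V : Set (Set X)} (h : leb V ≠ ⊤) :
    leb V ≤ ediam (univ : Set X) := by
  by_contra! hlt
  obtain ⟨δ, hdiam, hδ⟩ := exists_between hlt
  refine h (top_unique (le_sSup fun x => ?_))
  obtain ⟨A, hA, hball⟩ := exists_ball_subset_of_lt_leb hδ x
  exact ⟨A, hA, fun y _ =>
    hball ((edist_le_ediam_of_mem (mem_univ y) (mem_univ x)).trans_lt hdiam)⟩

lemma bddBelow_range_neg_log_leb [BoundedSpace X] {ι : Type*} (V : ι → Set (Set X)) :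
    BddBelow (range fun i => -Real.log (leb (V i)).toReal) := by
  set D := max 1 (ediam (univ : Set X)).toReal
  refine ⟨-Real.log D, forall_mem_range.mpr fun i => neg_le_neg ?_⟩
  rcases (leb (V i)).toReal_nonneg.eq_or_lt with hzero | hpos
  · rw [← hzero, Real.log_zero]
    exact Real.log_nonneg (le_max_left _ _)
  · have hfin : leb (V i) ≠ ⊤ := (ENNReal.toReal_pos_iff.mp hpos).2.ne
    refine Real.log_le_log hpos (le_max_of_le_right (ENNReal.toReal_mono ?_ ?_))
    · exact (Bornology.isBounded_univ.mpr ‹_›).ediam_ne_top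
    · exact leb_le_ediam_univ hfin

lemma isOpenCover_preCov {U : Set (Set X)} (hU : IsOpenCover U) {g : X → X}
    (hg : Continuous g) : IsOpenCover (preCov g U) := by
  refine ⟨?_, ?_⟩
  · rintro _ ⟨A, hA, rfl⟩
    exact (hU.1 A hA).preimage hg
  · rw [preCov, sUnion_image, ← preimage_sUnion, hU.2, preimage_univ]

lemma lebN_eq_iInf (f : X → X) (U : Set (Set X)) (n : ℕ) :
    lebN f U n = ⨅ k : Fin n, leb (preCov f^[k] U) := by
  refine le_antisymm (le_iInf fun k => sSup_le fun δ hδ => le_sSup fun x => ?_) ?_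
  · obtain ⟨_, ⟨g, hg, rfl⟩, hball⟩ := hδ x
    exact ⟨f^[k] ⁻¹' g k, ⟨g k, hg k, rfl⟩, hball.trans (iInter_subset _ k)⟩
  · refine le_of_forall_lt_imp_le_of_dense fun δ hδ => le_sSup fun x => ?_
    have hk (k : Fin n) := exists_ball_subset_of_lt_leb (hδ.trans_le (iInf_le _ k)) x
    choose A hA hball using hk
    choose B hB hBA using hA
    exact ⟨⋂ k : Fin n, f^[k] ⁻¹' B k, ⟨B, hB, rfl⟩,
      subset_iInter fun k => (hball k).trans (hBA k).ge⟩

end Lebesgue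

-- `-log x.toReal` is not antitone on `(0, ⊤]`: it takes the junk value `0` at `⊤`. Its positive
-- part is, and passing to it changes no growth rate since Lebesgue numbers are bounded above.
noncomputable def negLogPos (x : ℝ≥0∞) : ℝ := max 0 (-Real.log x.toReal)

lemma negLogPos_antitoneOn : AntitoneOn negLogPos (Ioi 0) := by
  intro x hx y _ hxy
  rcases eq_or_ne y ⊤ with rfl | hy
  · simp [negLogPos]
  · have hpos := ENNReal.toReal_pos (ne_of_gt hx) (ne_top_of_le_ne_top hy hxy)
    exact max_le_max le_rfl (neg_le_neg (Real.log_le_log hpos (ENNReal.toReal_mono hy hxy)))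

lemma negLogPos_iInf {ι : Type*} [Finite ι] {a : ι → ℝ≥0∞} (ha : ∀ i, 0 < a i) :
    negLogPos (⨅ i, a i) = ⨆ i, negLogPos (a i) := by
  rcases isEmpty_or_nonempty ι with hι | hι
  · simp [negLogPos, iInf_of_empty, Real.iSup_of_isEmpty]
  · obtain ⟨j, hj⟩ := exists_eq_ciInf_of_finite (f := a)
    rw [← hj]
    refine le_antisymm (le_ciSup (f := fun i => negLogPos (a i)) (Finite.bddAbove_range _) j)
      (ciSup_le fun i => ?_)
    exact negLogPos_antitoneOn (ha j) (ha i) (hj ▸ iInf_le a i)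

lemma negLogPos_nonneg (x : ℝ≥0∞) : 0 ≤ negLogPos x := le_max_left _ _

lemma limsup_coe_le_of_eventually_le_add_div {u : ℕ → ℝ} {z c : ℝ}
    (h : ∀ᶠ n in atTop, u n ≤ z + c / n) :
    limsup (fun n => (u n : EReal)) atTop ≤ z := by
  have hlim : Tendsto (fun n : ℕ => ((z + c / n : ℝ) : EReal)) atTop (𝓝 z) := by
    simpa using EReal.tendsto_coe.mpr
      (tendsto_const_nhds.add (tendsto_const_div_atTop_nhds_zero_nat c))
  calc limsup (fun n => (u n : EReal)) atTop
      ≤ limsup (fun n : ℕ => ((z + c / n : ℝ) : EReal)) atTop :=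
        limsup_le_limsup (h.mono fun n hn => EReal.coe_le_coe_iff.mpr hn)
    _ = z := hlim.limsup_eq

lemma eventually_lt_of_limsup_coe_lt {u : ℕ → ℝ} {z : ℝ}
    (h : limsup (fun n => (u n : EReal)) atTop < z) : ∀ᶠ n in atTop, u n < z :=
  (eventually_lt_of_limsup_lt h).mono fun _ hn => EReal.coe_lt_coe_iff.mp hn

lemma limsup_max_zero_div_eq {a : ℕ → ℝ} (ha : BddBelow (range a)) :
    limsup (fun n : ℕ => ((max 0 (a n) / n : ℝ) : EReal)) atTop =
      limsup (fun n : ℕ => ((a n / n : ℝ) : EReal)) atTop := by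
  obtain ⟨C, hC⟩ := ha
  refine le_antisymm (EReal.le_of_forall_lt_iff_le.mp fun z hz => ?_)
    (limsup_le_limsup (Eventually.of_forall fun n => EReal.coe_le_coe_iff.mpr
      (div_le_div_of_nonneg_right (le_max_right _ _) n.cast_nonneg)))
  refine limsup_coe_le_of_eventually_le_add_div (c := |C|) ?_
  filter_upwards [eventually_lt_of_limsup_coe_lt hz] with n hn
  have hmax : max 0 (a n) ≤ a n + |C| :=
    max_le (by linarith [hC (mem_range_self n), neg_abs_le C]) (by linarith [abs_nonneg C])
  calc max 0 (a n) / n ≤ (a n + |C|) / n := div_le_div_of_nonneg_right hmax n.cast_nonneg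
    _ = a n / n + |C| / n := add_div _ _ _
    _ ≤ z + |C| / n := by linarith

lemma limsup_iSup_fin_div_eq {d : ℕ → ℝ} (hd : ∀ n, 0 ≤ d n) :
    limsup (fun n : ℕ => (((⨆ k : Fin n, d k) / n : ℝ) : EReal)) atTop =
      limsup (fun n : ℕ => ((d n / n : ℝ) : EReal)) atTop := by
  set M : ℕ → ℝ := fun n => ⨆ k : Fin n, d k
  have hM_nonneg (n : ℕ) : 0 ≤ M n := Real.iSup_nonneg fun k => hd k
  have d_le_M {k n : ℕ} (h : k < n) : d k ≤ M n :=
    le_ciSup (f := fun i : Fin n => d i) (Finite.bddAbove_range _) ⟨k, h⟩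
  refine le_antisymm (EReal.le_of_forall_lt_iff_le.mp fun z hz => ?_)
    (EReal.le_of_forall_lt_iff_le.mp fun z hz => ?_)
  · obtain ⟨K, hK⟩ := ((eventually_lt_of_limsup_coe_lt hz).and
      (eventually_gt_atTop 0)).exists_forall_of_atTop
    have hlt {k : ℕ} (hk : K ≤ k) : d k < z * k :=
      (div_lt_iff₀ (Nat.cast_pos.mpr (hK k hk).2)).mp (hK k hk).1
    have hz : 0 < z := pos_of_mul_pos_left ((hd K).trans_lt (hlt le_rfl)) K.cast_nonneg
    refine limsup_coe_le_of_eventually_le_add_div (c := M K) ?_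
    filter_upwards [eventually_gt_atTop 0] with n hn
    have hMn : M n ≤ M K + z * n := by
      have hzn : 0 ≤ z * n := by positivity
      refine Real.iSup_le (fun k => ?_) (add_nonneg (hM_nonneg K) hzn)
      rcases lt_or_ge (k : ℕ) K with hk | hk
      · linarith [d_le_M hk]
      · have hkn : z * k ≤ z * n := mul_le_mul_of_nonneg_left (by exact_mod_cast k.isLt.le) hz.le
        linarith [hlt hk, hM_nonneg K]
    rw [div_le_iff₀ (Nat.cast_pos.mpr hn)]
    field_simp
    linarith
  · refine limsup_coe_le_of_eventually_le_add_div (c := z) ?_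
    filter_upwards [(tendsto_add_atTop_nat 1).eventually (eventually_lt_of_limsup_coe_lt hz),
      eventually_gt_atTop 0] with n hn hpos
    have hlt : d n < z * (n + 1) := by
      have := (div_lt_iff₀ (by positivity : (0 : ℝ) < (n + 1 : ℕ))).mp hn
      push_cast at this
      linarith [d_le_M n.lt_succ_self]
    rw [div_le_iff₀ (Nat.cast_pos.mpr hpos)]
    field_simp
    linarith

theorem hLplus_eq_limsup_preCov_general {X : Type*} [MetricSpace X] [CompactSpace X]
    (f : X → X) (hf : Continuous f) (U : Set (Set X))
    (hU : IsOpenCover U) :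
    hLplus f U =
      Filter.limsup
        (fun n : ℕ => ((-Real.log ((leb (preCov (f^[n]) U)).toReal) / n : ℝ) : EReal))
        Filter.atTop := by
  have hlebN (n : ℕ) :
      negLogPos (lebN f U n) = ⨆ k : Fin n, negLogPos (leb (preCov f^[k] U)) := by
    rw [lebN_eq_iInf]
    exact negLogPos_iInf fun k => leb_pos (isOpenCover_preCov hU (hf.iterate k))
  calc hLplus f U = limsup (fun n : ℕ => ((negLogPos (lebN f U n) / n : ℝ) : EReal)) atTop :=
        (limsup_max_zero_div_eq (bddBelow_range_neg_log_leb (covSeq f U))).symm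
    _ = limsup (fun n : ℕ =>
          (((⨆ k : Fin n, negLogPos (leb (preCov f^[k] U))) / n : ℝ) : EReal)) atTop := by
        simp only [hlebN]
    _ = limsup (fun n : ℕ => ((negLogPos (leb (preCov f^[n] U)) / n : ℝ) : EReal)) atTop :=
        limsup_iSup_fin_div_eq (d := fun k => negLogPos (leb (preCov f^[k] U)))
          fun n => negLogPos_nonneg _
    _ = _ := limsup_max_zero_div_eq (bddBelow_range_neg_log_leb fun n => preCov f^[n] U)

/-- `h_L^+(f,U) = limsup_n -(1/n) log δ(f^{-n}(U))`. -/
theorem hLplus_eq_limsup_preCov {X : Type*} [MetricSpace X] [CompactSpace X]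
    (f : X → X) (hf : Continuous f) (U : Set (Set X))
    (hU : IsOpenCover U) (hUfin : U.Finite) :
    hLplus f U =
      Filter.limsup
        (fun n : ℕ => ((-Real.log ((leb (preCov (f^[n]) U)).toReal) / n : ℝ) : EReal))
        Filter.atTop :=
  hLplus_eq_limsup_preCov_general f hf U hU
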